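/- There exists a constant C > 0 such that for all real T ≥ 2, the sum over integers n with 2 ≤ n ≤ T of θ(n)·θ(n−1) is at most C·T·(log T)². -/

import Mathlib

/-!
Every divisor of `m ≤ N` is at most `√N` or is the cofactor of one that is, so
`θ(m) ≤ 2·#{d ≤ √N : d ∣ m}`. Hence `θ(n)θ(n-1)` is at most four times the number of pairs
`a, b ≤ √N` with `a ∣ n` and `b ∣ n - 1`. Swapping the sums, for a fixed pair the `n ≤ N` counted
all lie in one residue class mod `ab` (such `a` and `b` are coprime), so there are at most
`N/(ab) + 1` of them. Summing over the pairs gives `N·H(√N)² + N = O(N log² N)`.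
-/

open Finset

namespace Nat

theorem card_divisors_le_two_mul_card_filter_dvd {m K : ℕ} (hm : m < (K + 1) ^ 2) :
    #m.divisors ≤ 2 * #{d ∈ Icc 1 K | d ∣ m} := by
  set S := {d ∈ Icc 1 K | d ∣ m}
  have hcover : m.divisors ⊆ S ∪ S.image (m / ·) := by
    intro d hd
    obtain ⟨hdm, hm0⟩ := mem_divisors.mp hd
    have hd0 : 0 < d := pos_of_dvd_of_pos hdm (pos_of_ne_zero hm0)
    rcases le_or_gt d K with hdK | hKd
    · exact mem_union_left _ (mem_filter.mpr ⟨mem_Icc.mpr ⟨hd0, hdK⟩, hdm⟩)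
    · refine mem_union_right _ (mem_image.mpr ⟨m / d, mem_filter.mpr
        ⟨mem_Icc.mpr ⟨?_, ?_⟩, div_dvd_of_dvd hdm⟩, Nat.div_div_self hdm hm0⟩)
      · exact Nat.div_pos (le_of_dvd (pos_of_ne_zero hm0) hdm) hd0
      · rw [← Nat.lt_succ_iff, Nat.div_lt_iff_lt_mul hd0]
        calc m < (K + 1) * (K + 1) := by rwa [← sq]
          _ ≤ (K + 1) * d := Nat.mul_le_mul_left _ hKd
  calc #m.divisors ≤ #(S ∪ S.image (m / ·)) := card_le_card hcover
    _ ≤ #S + #(S.image (m / ·)) := card_union_le _ _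
    _ ≤ #S + #S := Nat.add_le_add_left Finset.card_image_le _
    _ = 2 * #S := (two_mul _).symm

theorem card_le_div_add_one_of_modEq {s : Finset ℕ} {N q : ℕ} (hsN : ∀ n ∈ s, n ≤ N)
    (hs : ∀ n ∈ s, ∀ n' ∈ s, n ≡ n' [MOD q]) : #s ≤ N / q + 1 := by
  have hinj : Set.InjOn (· / q) s := fun n hn n' hn' hdiv => by
    have hmod : n % q = n' % q := hs n hn n' hn'
    rw [← div_add_mod n q, ← div_add_mod n' q, hmod]
    simp only at hdiv
    rw [hdiv]
  calc #s = #(s.image (· / q)) := (Finset.card_image_of_injOn hinj).symm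
    _ ≤ #(range (N / q + 1)) := card_le_card fun k hk => by
        obtain ⟨n, hn, rfl⟩ := mem_image.mp hk
        exact mem_range.mpr (lt_succ_of_le (Nat.div_le_div_right (hsN n hn)))
    _ = N / q + 1 := card_range _

theorem card_filter_dvd_and_dvd_sub_one_le (a b N : ℕ) :
    #{n ∈ Icc 2 N | a ∣ n ∧ b ∣ n - 1} ≤ N / (a * b) + 1 := by
  refine card_le_div_add_one_of_modEq (fun n hn => (mem_Icc.mp (mem_filter.mp hn).1).2) ?_
  intro n hn n' hn'
  simp only [mem_filter, mem_Icc] at hn hn'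
  obtain ⟨⟨hn2, -⟩, han, hbn⟩ := hn
  obtain ⟨⟨hn2', -⟩, han', hbn'⟩ := hn'
  have hab : Coprime a b :=
    (((coprime_self_sub_right (by omega : 1 ≤ n)).mpr (coprime_one_right n)).coprime_dvd_left
      han).coprime_dvd_right hbn
  refine (modEq_and_modEq_iff_modEq_mul hab).mp ⟨?_, ?_⟩
  · exact (modEq_zero_iff_dvd.mpr han).trans (modEq_zero_iff_dvd.mpr han').symm
  · exact ((modEq_iff_dvd' (by omega)).mpr hbn).symm.trans ((modEq_iff_dvd' (by omega)).mpr hbn')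

end Nat

theorem Finset.sum_card_filter_mul_card_filter {ι α β : Type*} (s : Finset ι) (A : Finset α)
    (B : Finset β) (P : α → ι → Prop) (Q : β → ι → Prop) [∀ a n, Decidable (P a n)]
    [∀ b n, Decidable (Q b n)] :
    ∑ n ∈ s, #{a ∈ A | P a n} * #{b ∈ B | Q b n} =
      ∑ a ∈ A, ∑ b ∈ B, #{n ∈ s | P a n ∧ Q b n} := by
  simp only [card_filter, sum_mul_sum, ite_zero_mul_ite_zero, mul_one]
  rw [sum_comm]
  exact sum_congr rfl fun a _ => sum_comm

open Nat in
theorem sum_card_divisors_mul_card_divisors_sub_one_le (N : ℕ) :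
    ∑ n ∈ Icc 2 N, #n.divisors * #(n - 1).divisors ≤
      4 * ∑ a ∈ Icc 1 (sqrt N), ∑ b ∈ Icc 1 (sqrt N), (N / (a * b) + 1) := by
  set K := sqrt N
  have hdiv : ∀ m ≤ N, #m.divisors ≤ 2 * #{d ∈ Icc 1 K | d ∣ m} := fun m hm =>
    card_divisors_le_two_mul_card_filter_dvd ((lt_succ_sqrt' N).trans_le' hm)
  calc ∑ n ∈ Icc 2 N, #n.divisors * #(n - 1).divisors
      ≤ ∑ n ∈ Icc 2 N, 4 * (#{a ∈ Icc 1 K | a ∣ n} * #{b ∈ Icc 1 K | b ∣ n - 1}) :=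
        sum_le_sum fun n hn => by
          have hnN := (mem_Icc.mp hn).2
          calc #n.divisors * #(n - 1).divisors
              ≤ (2 * #{a ∈ Icc 1 K | a ∣ n}) * (2 * #{b ∈ Icc 1 K | b ∣ n - 1}) :=
                Nat.mul_le_mul (hdiv n hnN) (hdiv (n - 1) (by omega))
            _ = _ := by ring
    _ = 4 * ∑ a ∈ Icc 1 K, ∑ b ∈ Icc 1 K, #{n ∈ Icc 2 N | a ∣ n ∧ b ∣ n - 1} := by
        rw [← mul_sum, sum_card_filter_mul_card_filter]
    _ ≤ 4 * ∑ a ∈ Icc 1 K, ∑ b ∈ Icc 1 K, (N / (a * b) + 1) := by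
        gcongr with a _ b _
        exact card_filter_dvd_and_dvd_sub_one_le a b N

theorem sum_Icc_sum_Icc_div_mul_add_one_le (N K : ℕ) :
    ((∑ a ∈ Icc 1 K, ∑ b ∈ Icc 1 K, (N / (a * b) + 1) : ℕ) : ℝ) ≤
      N * (1 + Real.log K) ^ 2 + K ^ 2 := by
  have hH : ∑ a ∈ Icc 1 K, (a : ℝ)⁻¹ ≤ 1 + Real.log K := by
    simpa [harmonic_eq_sum_Icc] using harmonic_le_one_add_log K
  calc ((∑ a ∈ Icc 1 K, ∑ b ∈ Icc 1 K, (N / (a * b) + 1) : ℕ) : ℝ)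
      ≤ ∑ a ∈ Icc 1 K, ∑ b ∈ Icc 1 K, ((N : ℝ) * ((a : ℝ)⁻¹ * (b : ℝ)⁻¹) + 1) := by
        push_cast
        gcongr with a _ b _
        calc ((N / (a * b) : ℕ) : ℝ) ≤ N / (a * b : ℕ) := Nat.cast_div_le
          _ = N * ((a : ℝ)⁻¹ * (b : ℝ)⁻¹) := by push_cast; rw [div_eq_mul_inv, mul_inv]
    _ = N * (∑ a ∈ Icc 1 K, (a : ℝ)⁻¹) ^ 2 + K ^ 2 := by
        rw [sq (∑ a ∈ Icc 1 K, (a : ℝ)⁻¹), sum_mul_sum]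
        simp only [sum_add_distrib, mul_sum, sum_const, Nat.card_Icc, nsmul_eq_mul]
        push_cast
        ring
    _ ≤ N * (1 + Real.log K) ^ 2 + K ^ 2 := by
        gcongr

/-- Lemma 3: There is a constant `C > 0` such that for all real
`T ≥ 2`, `∑_{2 ≤ n ≤ T} θ(n)·θ(n-1) ≤ C·T·(log T)²`. -/
theorem sum_theta_theta_bound :
    ∃ C : ℝ, 0 < C ∧ ∀ T : ℝ, 2 ≤ T →
      (∑ n ∈ Finset.Icc 2 ⌊T⌋₊, ((n.divisors.card : ℝ) * ((n - 1).divisors.card : ℝ))) ≤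
        C * T * Real.log T ^ 2 := by
  refine ⟨52, by norm_num, fun T hT => ?_⟩
  set N := ⌊T⌋₊
  set K := Nat.sqrt N
  set L := Real.log T
  have hNT : (N : ℝ) ≤ T := Nat.floor_le (by linarith)
  have hKN : (K : ℝ) ^ 2 ≤ N := by exact_mod_cast Nat.sqrt_le' N
  have hK : (1 : ℝ) ≤ K := by
    have hN : 2 ≤ N := Nat.le_floor (by exact_mod_cast hT)
    exact_mod_cast Nat.le_sqrt.mpr (by omega : 1 * 1 ≤ N)
  have hlogK : Real.log K ≤ L := Real.log_le_log (by linarith) (by nlinarith)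
  have hL : 1 / 2 ≤ L := by
    linarith [Real.log_le_log (by norm_num) hT, Real.log_two_gt_d9]
  have hlog : (1 + Real.log K) ^ 2 ≤ 9 * L ^ 2 := by
    nlinarith [Real.log_nonneg hK]
  have hK2 : (K : ℝ) ^ 2 ≤ T * (4 * L ^ 2) := by
    nlinarith [mul_le_mul_of_nonneg_left (by nlinarith : 1 ≤ 4 * L ^ 2) (by linarith : 0 ≤ T)]
  calc (∑ n ∈ Icc 2 N, ((#n.divisors : ℝ) * (#(n - 1).divisors : ℝ)))
      = ((∑ n ∈ Icc 2 N, #n.divisors * #(n - 1).divisors : ℕ) : ℝ) := by push_cast; rfl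
    _ ≤ ((4 * ∑ a ∈ Icc 1 K, ∑ b ∈ Icc 1 K, (N / (a * b) + 1) : ℕ) : ℝ) := by
        exact_mod_cast sum_card_divisors_mul_card_divisors_sub_one_le N
    _ ≤ 4 * (N * (1 + Real.log K) ^ 2 + (K : ℝ) ^ 2) := by
        rw [Nat.cast_mul, Nat.cast_ofNat]
        gcongr
        exact sum_Icc_sum_Icc_div_mul_add_one_le N K
    _ ≤ 4 * (T * (9 * L ^ 2) + T * (4 * L ^ 2)) := by gcongr
    _ = 52 * T * L ^ 2 := by ring
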